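/- arXiv:2009.07668 — 4 statements merged into one kernel-verified Lean document; each statement's English description precedes it below -/
import Mathlib

section
/- Let ρ_S and ρ_E be density matrices on finite-dimensional Hilbert spaces H_S and H_E, U a unitary on H_S ⊗ H_E, and ρ'_{SE} = U(ρ_S ⊗ ρ_E)U†, with marginals ρ'_S and ρ'_E. Then the entropy production Σ := I(S:E)_{ρ'_{SE}} + S(ρ'_E ‖ ρ_E) equals the relative entropy S(ρ'_{SE} ‖ ρ'_S ⊗ ρ_E). -/
open Matrix Kronecker BigOperators
open scoped ComplexOrder

noncomputable section

/-- Matrix logarithm of a Hermitian matrix, defined via the spectral decomposition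
(junk value `0` for non-Hermitian input). -/
def matLog {n : Type*} [Fintype n] [DecidableEq n] (A : Matrix n n ℂ) : Matrix n n ℂ :=
  if h : A.IsHermitian then
    (h.eigenvectorUnitary : Matrix n n ℂ) *
      Matrix.diagonal (fun i => (Real.log (h.eigenvalues i) : ℂ)) *
      (star (h.eigenvectorUnitary : Matrix n n ℂ))
  else 0

/-- Von Neumann entropy `S(ρ) = -Tr(ρ log ρ)`. -/
def vnEntropy {n : Type*} [Fintype n] [DecidableEq n] (ρ : Matrix n n ℂ) : ℝ :=
  (-(ρ * matLog ρ).trace).re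

/-- Quantum relative entropy `S(ρ‖σ) = Tr(ρ log ρ - ρ log σ)`. -/
def relEnt {n : Type*} [Fintype n] [DecidableEq n] (ρ σ : Matrix n n ℂ) : ℝ :=
  ((ρ * matLog ρ - ρ * matLog σ).trace).re

/-- Partial trace over the environment (second factor). -/
def ptrE {s e : Type*} [Fintype s] [Fintype e]
    (ρ : Matrix (s × e) (s × e) ℂ) : Matrix s s ℂ :=
  Matrix.of fun i j => ∑ k, ρ (i, k) (j, k)

/-- Partial trace over the system (first factor). -/
def ptrS {s e : Type*} [Fintype s] [Fintype e]
    (ρ : Matrix (s × e) (s × e) ℂ) : Matrix e e ℂ :=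
  Matrix.of fun i j => ∑ k, ρ (k, i) (k, j)

/-- Quantum mutual information `I(S:E)_ρ = S(ρ_S) + S(ρ_E) - S(ρ_SE)`. -/
def mutInfo {s e : Type*} [Fintype s] [DecidableEq s] [Fintype e] [DecidableEq e]
    (ρ : Matrix (s × e) (s × e) ℂ) : ℝ :=
  vnEntropy (ptrE ρ) + vnEntropy (ptrS ρ) - vnEntropy ρ

/-! The marginal `ρ'_S` of the positive definite state `ρ'` is positive definite, and the
logarithm of a Kronecker product of positive definite matrices splits as
`log (A ⊗ B) = log A ⊗ 1 + 1 ⊗ log B` (diagonalize both factors simultaneously; the matrix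
logarithm does not depend on the chosen diagonalization, being a polynomial in its argument).
Tracing `ρ'` against the two summands gives `Tr ρ'_S log ρ'_S` and `Tr ρ'_E log ρ_E`, after which
both sides of the identity are the same linear combination of traces. -/

section

open Polynomial

variable {n : Type*} [Fintype n] [DecidableEq n]

lemma aeval_unitary_conj_diagonal {W : Matrix n n ℂ} (hW : W ∈ unitaryGroup n ℂ) (d : n → ℝ)
    (p : ℝ[X]) :
    aeval (W * diagonal (fun i => (d i : ℂ)) * Wᴴ) p =
      W * diagonal (fun i => ((p.eval (d i) : ℝ) : ℂ)) * Wᴴ := by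
  have hconj (X : Matrix n n ℂ) : W * X * Wᴴ =
      ((Unitary.conjStarAlgAut ℝ _ ⟨W, hW⟩).toAlgEquiv : Matrix n n ℂ →ₐ[ℝ] Matrix n n ℂ) X := rfl
  have hdiag (v : n → ℝ) :
      diagonal (fun i => (v i : ℂ)) = diagonalAlgHom ℝ (fun i => algebraMap ℝ ℂ (v i)) := rfl
  rw [hconj, hconj, hdiag, hdiag, aeval_algHom_apply, aeval_algHom_apply, aeval_pi_apply]
  simp_rw [aeval_algebraMap_apply_eq_algebraMap_eval]

lemma matLog_unitary_conj_diagonal {W : Matrix n n ℂ} (hW : W ∈ unitaryGroup n ℂ) (d : n → ℝ) :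
    matLog (W * diagonal (fun i => (d i : ℂ)) * Wᴴ) =
      W * diagonal (fun i => (Real.log (d i) : ℂ)) * Wᴴ := by
  set A := W * diagonal (fun i => (d i : ℂ)) * Wᴴ
  have hA : A.IsHermitian :=
    isHermitian_mul_mul_conjTranspose W (isHermitian_diagonal_of_self_adjoint _ (by ext; simp))
  set V := (hA.eigenvectorUnitary : Matrix n n ℂ)
  have hV : V ∈ unitaryGroup n ℂ := hA.eigenvectorUnitary.2
  have hspec : A = V * diagonal (fun i => (hA.eigenvalues i : ℂ)) * Vᴴ := hA.spectral_theorem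
  set nodes := Finset.univ.image hA.eigenvalues ∪ Finset.univ.image d
  set p := Lagrange.interpolate nodes id Real.log
  have hp : ∀ x ∈ nodes, p.eval x = Real.log x := fun x hx =>
    Lagrange.eval_interpolate_at_node _ (Set.injOn_id _) hx
  calc matLog A = V * diagonal (fun i => (Real.log (hA.eigenvalues i) : ℂ)) * Vᴴ := by
        rw [matLog, dif_pos hA]; rfl
    _ = aeval (V * diagonal (fun i => (hA.eigenvalues i : ℂ)) * Vᴴ) p := by
        rw [aeval_unitary_conj_diagonal hV]
        simp (disch := simp [nodes]) only [hp]
    _ = aeval A p := by rw [← hspec]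
    _ = W * diagonal (fun i => (Real.log (d i) : ℂ)) * Wᴴ := by
        rw [aeval_unitary_conj_diagonal hW]
        simp (disch := simp [nodes]) only [hp]

variable {m : Type*} [Fintype m] [DecidableEq m]

lemma matLog_kronecker {A : Matrix m m ℂ} {B : Matrix n n ℂ} (hA : A.PosDef) (hB : B.PosDef) :
    matLog (A ⊗ₖ B) = matLog A ⊗ₖ 1 + 1 ⊗ₖ matLog B := by
  set V := (hA.1.eigenvectorUnitary : Matrix m m ℂ)
  set W := (hB.1.eigenvectorUnitary : Matrix n n ℂ)
  set a := hA.1.eigenvalues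
  set b := hB.1.eigenvalues
  have hV : V ∈ unitaryGroup m ℂ := hA.1.eigenvectorUnitary.2
  have hW : W ∈ unitaryGroup n ℂ := hB.1.eigenvectorUnitary.2
  have hAspec : A = V * diagonal (fun i => (a i : ℂ)) * Vᴴ := hA.1.spectral_theorem
  have hBspec : B = W * diagonal (fun j => (b j : ℂ)) * Wᴴ := hB.1.spectral_theorem
  have hABspec :
      A ⊗ₖ B = (V ⊗ₖ W) * diagonal (fun p => ((a p.1 * b p.2 : ℝ) : ℂ)) * (V ⊗ₖ W)ᴴ := by
    rw [hAspec, hBspec, mul_kronecker_mul, mul_kronecker_mul, diagonal_kronecker_diagonal,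
      conjTranspose_kronecker]
    push_cast
    rfl
  have hlog : diagonal (fun p : m × n => (Real.log (a p.1 * b p.2) : ℂ)) =
      diagonal (fun i => (Real.log (a i) : ℂ)) ⊗ₖ 1 +
        1 ⊗ₖ diagonal (fun j => (Real.log (b j) : ℂ)) := by
    rw [← diagonal_one, ← diagonal_one, diagonal_kronecker_diagonal, diagonal_kronecker_diagonal,
      diagonal_add]
    congr 1
    funext p
    rw [Real.log_mul (hA.eigenvalues_pos p.1).ne' (hB.eigenvalues_pos p.2).ne']
    push_cast
    ring
  have hVV : V * 1 * Vᴴ = 1 := by rw [mul_one]; exact mem_unitaryGroup_iff.mp hV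
  have hWW : W * 1 * Wᴴ = 1 := by rw [mul_one]; exact mem_unitaryGroup_iff.mp hW
  rw [hABspec, matLog_unitary_conj_diagonal (kronecker_mem_unitary hV hW), hlog, mul_add, add_mul,
    conjTranspose_kronecker, ← mul_kronecker_mul, ← mul_kronecker_mul, ← mul_kronecker_mul,
    ← mul_kronecker_mul, hVV, hWW, hAspec, hBspec, matLog_unitary_conj_diagonal hV,
    matLog_unitary_conj_diagonal hW]

end

section

variable {s e : Type*} [Fintype s] [Fintype e]

lemma ptrE_eq_sum_submatrix (ρ : Matrix (s × e) (s × e) ℂ) :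
    ptrE ρ = ∑ k, ρ.submatrix (·, k) (·, k) := by
  ext i j
  simp [ptrE, Matrix.sum_apply]

lemma Matrix.PosDef.ptrE [Nonempty e] {ρ : Matrix (s × e) (s × e) ℂ} (hρ : ρ.PosDef) :
    (ptrE ρ).PosDef := by
  rw [ptrE_eq_sum_submatrix]
  exact posDef_sum Finset.univ_nonempty fun k _ => hρ.submatrix (Prod.mk_left_injective k)

lemma trace_mul_kronecker_one [DecidableEq e] (ρ : Matrix (s × e) (s × e) ℂ) (X : Matrix s s ℂ) :
    (ρ * (X ⊗ₖ 1)).trace = (ptrE ρ * X).trace := by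
  simp only [trace, diag_apply, mul_apply, kroneckerMap_apply, one_apply, mul_ite, mul_one,
    mul_zero, Fintype.sum_prod_type, Finset.sum_ite_eq', Finset.mem_univ, ↓reduceIte, ptrE,
    of_apply, Finset.sum_mul]
  exact Finset.sum_congr rfl fun _ _ => Finset.sum_comm

lemma trace_mul_one_kronecker [DecidableEq s] (ρ : Matrix (s × e) (s × e) ℂ) (Y : Matrix e e ℂ) :
    (ρ * (1 ⊗ₖ Y)).trace = (ptrS ρ * Y).trace := by
  simp only [trace, diag_apply, mul_apply, kroneckerMap_apply, one_apply, ite_mul, one_mul,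
    zero_mul, mul_ite, mul_zero, Fintype.sum_prod_type, Finset.sum_ite_irrel, Finset.sum_const_zero,
    Finset.sum_ite_eq', Finset.mem_univ, ↓reduceIte, ptrS, of_apply, Finset.sum_mul]
  rw [Finset.sum_comm]
  exact Finset.sum_congr rfl fun _ _ => Finset.sum_comm

lemma mutInfo_add_relEnt_ptrS [DecidableEq s] [DecidableEq e] {ρ : Matrix (s × e) (s × e) ℂ}
    {σ : Matrix e e ℂ} (hρ : (ptrE ρ).PosDef) (hσ : σ.PosDef) :
    mutInfo ρ + relEnt (ptrS ρ) σ = relEnt ρ (ptrE ρ ⊗ₖ σ) := by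
  simp only [mutInfo, relEnt, vnEntropy]
  rw [matLog_kronecker hρ hσ, mul_add, trace_sub, trace_sub, trace_add, trace_mul_kronecker_one,
    trace_mul_one_kronecker]
  simp only [Complex.sub_re, Complex.add_re, Complex.neg_re]
  ring

end

theorem entropy_production_eq_relEnt_general
    {s e : Type*} [Fintype s] [DecidableEq s] [Fintype e] [DecidableEq e]
    (ρS : Matrix s s ℂ) (ρE : Matrix e e ℂ) (U : Matrix (s × e) (s × e) ℂ)
    (hρS : ρS.PosDef)
    (hρE : ρE.PosDef) (hρEtr : ρE.trace = 1)
    (hU : U ∈ Matrix.unitaryGroup (s × e) ℂ)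
    (ρ' : Matrix (s × e) (s × e) ℂ) (hρ' : ρ' = U * (ρS ⊗ₖ ρE) * Uᴴ) :
    mutInfo ρ' + relEnt (ptrS ρ') ρE = relEnt ρ' ((ptrE ρ') ⊗ₖ ρE) := by
  have : Nonempty e := by
    by_contra!
    simp [trace] at hρEtr
  have hρ'_posDef : ρ'.PosDef := by
    rw [hρ', ← star_eq_conjTranspose,
      IsUnit.posDef_star_right_conjugate_iff (Unitary.isUnit_coe (U := ⟨U, hU⟩))]
    exact hρS.kronecker hρE
  exact mutInfo_add_relEnt_ptrS hρ'_posDef.ptrE hρE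

/-- For density matrices `ρS`, `ρE` (full rank so that all relative
entropies are finite) and a unitary `U`, with `ρ' = U (ρS ⊗ ρE) U†`, the entropy
production `Σ = I(S:E)_{ρ'} + S(ρ'_E ‖ ρE)` equals `S(ρ' ‖ ρ'_S ⊗ ρE)`. -/
theorem entropy_production_eq_relEnt
    {s e : Type*} [Fintype s] [DecidableEq s] [Fintype e] [DecidableEq e]
    (ρS : Matrix s s ℂ) (ρE : Matrix e e ℂ) (U : Matrix (s × e) (s × e) ℂ)
    (hρS : ρS.PosDef) (hρStr : ρS.trace = 1)
    (hρE : ρE.PosDef) (hρEtr : ρE.trace = 1)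
    (hU : U ∈ Matrix.unitaryGroup (s × e) ℂ)
    (ρ' : Matrix (s × e) (s × e) ℂ) (hρ' : ρ' = U * (ρS ⊗ₖ ρE) * Uᴴ) :
    mutInfo ρ' + relEnt (ptrS ρ') ρE = relEnt ρ' ((ptrE ρ') ⊗ₖ ρE) :=
  entropy_production_eq_relEnt_general ρS ρE U hρS hρE hρEtr hU ρ' hρ'
end
end

section
/- Suppose the global unitary map has a fixed point: U(ρ*_S ⊗ ρ_E)U† = ρ*_S ⊗ ρ_E for some density matrix ρ*_S. Then the entropy flux Φ := Tr_E{(ρ_E − ρ'_E) log ρ_E} satisfies Φ = Tr_S{(ρ'_S − ρ_S) log ρ*_S}, i.e., the flux can be expressed solely in terms of system quantities. -/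
open Matrix Kronecker BigOperators
open scoped ComplexOrder

noncomputable section

/-!
The fixed-point equation says that `U` commutes with `ρ*_S ⊗ ρ_E`, hence with every polynomial
in it. Diagonalising `ρ*_S` and `ρ_E`, the matrix `log ρ*_S ⊗ 1 + 1 ⊗ log ρ_E` is obtained from
`ρ*_S ⊗ ρ_E` by applying `log` to its eigenvalues `λ_i μ_j` (as `log (λ μ) = log λ + log μ`), so it
is such a polynomial (Lagrange interpolation) and commutes with `U`. Consequently
`Tr (ρ' L) = Tr ((ρ_S ⊗ ρ_E) L)` for `L = log ρ*_S ⊗ 1 + 1 ⊗ log ρ_E`, and writing both sides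
through partial traces gives
`Tr (ρ'_S log ρ*_S) + Tr (ρ'_E log ρ_E) = Tr (ρ_S log ρ*_S) + Tr (ρ_E log ρ_E)`,
which rearranges to the claim.
-/

open Polynomial

theorem Commute.algHom_apply_comp {ι K A : Type*} [Finite ι] [Field K] [Ring A] [Algebra K A]
    (ψ : (ι → K) →ₐ[K] A) {b : A} {d : ι → K} (h : Commute b (ψ d)) (f : K → K) :
    Commute b (ψ (f ∘ d)) := by
  classical
  have := Fintype.ofFinite ι
  -- Lagrange interpolation at the finitely many values of `d` makes `f ∘ d` a polynomial in `d`.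
  set p : K[X] := Lagrange.interpolate (Finset.univ.image d) id f
  have hp : f ∘ d = aeval d p := by
    ext i
    rw [aeval_pi_apply]
    exact (Lagrange.eval_interpolate_at_node f (Set.injOn_id _)
      (Finset.mem_image_of_mem d (Finset.mem_univ i))).symm
  rw [hp, ← aeval_algHom_apply]
  exact Algebra.commute_of_mem_adjoin_singleton_of_commute (aeval_mem_adjoin_singleton K _) h

theorem Unitary.conjStarAlgAut_kronecker {R m n : Type*} [CommSemiring R] [StarRing R]
    [Fintype m] [DecidableEq m] [Fintype n] [DecidableEq n]
    (u : unitary (Matrix m m R)) (v : unitary (Matrix n n R))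
    (X : Matrix m m R) (Y : Matrix n n R) :
    Unitary.conjStarAlgAut R _
        ⟨(u : Matrix m m R) ⊗ₖ (v : Matrix n n R), kronecker_mem_unitary u.2 v.2⟩ (X ⊗ₖ Y)
      = Unitary.conjStarAlgAut R _ u X ⊗ₖ Unitary.conjStarAlgAut R _ v Y := by
  simp [mul_kronecker_mul, star_eq_conjTranspose, conjTranspose_kronecker]

theorem matLog_eq_conjStarAlgAut {n : Type*} [Fintype n] [DecidableEq n] {A : Matrix n n ℂ}
    (hA : A.IsHermitian) :
    matLog A = Unitary.conjStarAlgAut ℂ _ hA.eigenvectorUnitary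
      (diagonal (fun i => (Real.log (hA.eigenvalues i) : ℂ))) := by
  rw [matLog, dif_pos hA, Unitary.conjStarAlgAut_apply]

theorem Commute.of_mul_mul_star_eq {R : Type*} [Monoid R] [StarMul R] {u a : R}
    (hu : u ∈ unitary R) (h : u * a * star u = a) : Commute u a := by
  calc u * a = u * a * star u * u := by
        rw [mul_assoc _ (star u), Unitary.star_mul_self_of_mem hu, mul_one]
    _ = a * u := by rw [h]

theorem trace_mul_mul_star_mul_of_commute {n R : Type*} [Fintype n] [DecidableEq n]
    [CommRing R] [StarRing R] {U L : Matrix n n R} (hU : U ∈ unitary (Matrix n n R))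
    (h : Commute U L) (X : Matrix n n R) :
    (U * X * star U * L).trace = (X * L).trace := by
  have hL : star U * L * U = L := by
    rw [mul_assoc, ← h.eq, ← mul_assoc, Unitary.star_mul_self_of_mem hU, one_mul]
  calc (U * X * star U * L).trace = (U * (X * (star U * L))).trace := by simp only [mul_assoc]
    _ = (X * (star U * L * U)).trace := by rw [trace_mul_comm, mul_assoc]
    _ = (X * L).trace := by rw [hL]

theorem trace_ptrS_mul {s e : Type*} [Fintype s] [DecidableEq s] [Fintype e]
    (ρ : Matrix (s × e) (s × e) ℂ) (M : Matrix e e ℂ) :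
    (ptrS ρ * M).trace = (ρ * ((1 : Matrix s s ℂ) ⊗ₖ M)).trace := by
  simp only [trace, ptrS, diag_apply, mul_apply, of_apply, Finset.sum_mul, kroneckerMap_apply,
    one_apply, ite_mul, one_mul, zero_mul, mul_ite, mul_zero, Fintype.sum_prod_type,
    Finset.sum_ite_irrel, Finset.sum_const_zero, Finset.sum_ite_eq', Finset.mem_univ, ↓reduceIte]
  exact (Finset.sum_comm.trans (Finset.sum_congr rfl fun _ _ => Finset.sum_comm)).symm

theorem trace_ptrE_mul {s e : Type*} [Fintype s] [Fintype e] [DecidableEq e]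
    (ρ : Matrix (s × e) (s × e) ℂ) (M : Matrix s s ℂ) :
    (ptrE ρ * M).trace = (ρ * (M ⊗ₖ (1 : Matrix e e ℂ))).trace := by
  simp only [trace, ptrE, diag_apply, mul_apply, of_apply, Finset.sum_mul, kroneckerMap_apply,
    one_apply, mul_ite, mul_one, mul_zero, Fintype.sum_prod_type, Finset.sum_ite_eq',
    Finset.mem_univ, ↓reduceIte]
  exact Finset.sum_congr rfl fun _ _ => Finset.sum_comm

theorem Commute.matLog_kronecker_add {m n : Type*} [Fintype m] [DecidableEq m] [Fintype n]
    [DecidableEq n] {A : Matrix m m ℂ} {B : Matrix n n ℂ} (hA : A.PosDef) (hB : B.PosDef)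
    {U : Matrix (m × n) (m × n) ℂ} (h : Commute U (A ⊗ₖ B)) :
    Commute U (matLog A ⊗ₖ 1 + 1 ⊗ₖ matLog B) := by
  have hAh : A.IsHermitian := hA.1
  have hBh : B.IsHermitian := hB.1
  let ψ := (AlgHomClass.toAlgHom (Unitary.conjStarAlgAut ℂ _
    ⟨(hAh.eigenvectorUnitary : Matrix m m ℂ) ⊗ₖ (hBh.eigenvectorUnitary : Matrix n n ℂ),
      kronecker_mem_unitary hAh.eigenvectorUnitary.2 hBh.eigenvectorUnitary.2⟩)).comp
    (diagonalAlgHom ℂ)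
  let d : m × n → ℂ := fun p => hAh.eigenvalues p.1 * hBh.eigenvalues p.2
  have hAB : A ⊗ₖ B = ψ d := by
    conv_lhs => rw [hAh.spectral_theorem, hBh.spectral_theorem]
    rw [← Unitary.conjStarAlgAut_kronecker, diagonal_kronecker_diagonal]
    rfl
  have hlog : matLog A ⊗ₖ 1 + 1 ⊗ₖ matLog B = ψ ((fun z => (Real.log z.re : ℂ)) ∘ d) := by
    rw [matLog_eq_conjStarAlgAut hAh, matLog_eq_conjStarAlgAut hBh,
      ← map_one (Unitary.conjStarAlgAut ℂ _ hBh.eigenvectorUnitary),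
      ← map_one (Unitary.conjStarAlgAut ℂ _ hAh.eigenvectorUnitary),
      ← Unitary.conjStarAlgAut_kronecker, ← Unitary.conjStarAlgAut_kronecker, ← map_add,
      ← diagonal_one, ← diagonal_one, diagonal_kronecker_diagonal, diagonal_kronecker_diagonal,
      diagonal_add]
    change _ = Unitary.conjStarAlgAut ℂ _ _ (diagonal _)
    congr 2
    funext p
    simp [d, ← Complex.ofReal_mul,
      Real.log_mul (hA.eigenvalues_pos p.1).ne' (hB.eigenvalues_pos p.2).ne']
  rw [hlog]
  exact (hAB ▸ h).algHom_apply_comp ψ _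

theorem entropy_flux_fixed_point_general
    {s e : Type*} [Fintype s] [DecidableEq s] [Fintype e] [DecidableEq e]
    (ρS ρStar : Matrix s s ℂ) (ρE : Matrix e e ℂ) (U : Matrix (s × e) (s × e) ℂ)
    (hρStr : ρS.trace = 1)
    (hρStar : ρStar.PosDef)
    (hρE : ρE.PosDef) (hρEtr : ρE.trace = 1)
    (hU : U ∈ Matrix.unitaryGroup (s × e) ℂ)
    (hfix : U * (ρStar ⊗ₖ ρE) * Uᴴ = ρStar ⊗ₖ ρE)
    (ρ' : Matrix (s × e) (s × e) ℂ) (hρ' : ρ' = U * (ρS ⊗ₖ ρE) * Uᴴ) :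
    (((ρE - ptrS ρ') * matLog ρE).trace).re
      = (((ptrE ρ' - ρS) * matLog ρStar).trace).re := by
  have hcomm := Commute.matLog_kronecker_add hρStar hρE (Commute.of_mul_mul_star_eq hU hfix)
  have htrace := trace_mul_mul_star_mul_of_commute hU hcomm (ρS ⊗ₖ ρE)
  rw [star_eq_conjTranspose, ← hρ', mul_add, mul_add, trace_add, trace_add, ← trace_ptrE_mul,
    ← trace_ptrS_mul, ← mul_kronecker_mul, ← mul_kronecker_mul, trace_kronecker,
    trace_kronecker, Matrix.mul_one, Matrix.mul_one, hρStr, hρEtr, mul_one, one_mul] at htrace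
  rw [sub_mul, sub_mul, trace_sub, trace_sub]
  congr 1
  linear_combination -htrace

/-- If the global unitary has a fixed point,
`U (ρ*_S ⊗ ρE) U† = ρ*_S ⊗ ρE`, then the entropy flux
`Φ = Tr_E{(ρE - ρ'_E) log ρE}` can be expressed solely in terms of system quantities:
`Φ = Tr_S{(ρ'_S - ρS) log ρ*_S}`. -/
theorem entropy_flux_fixed_point
    {s e : Type*} [Fintype s] [DecidableEq s] [Fintype e] [DecidableEq e]
    (ρS ρStar : Matrix s s ℂ) (ρE : Matrix e e ℂ) (U : Matrix (s × e) (s × e) ℂ)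
    (hρS : ρS.PosSemidef) (hρStr : ρS.trace = 1)
    (hρStar : ρStar.PosDef) (hρStarTr : ρStar.trace = 1)
    (hρE : ρE.PosDef) (hρEtr : ρE.trace = 1)
    (hU : U ∈ Matrix.unitaryGroup (s × e) ℂ)
    (hfix : U * (ρStar ⊗ₖ ρE) * Uᴴ = ρStar ⊗ₖ ρE)
    (ρ' : Matrix (s × e) (s × e) ℂ) (hρ' : ρ' = U * (ρS ⊗ₖ ρE) * Uᴴ) :
    (((ρE - ptrS ρ') * matLog ρE).trace).re
      = (((ptrE ρ' - ρS) * matLog ρStar).trace).re :=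
  entropy_flux_fixed_point_general ρS ρStar ρE U hρStr hρStar hρE hρEtr hU hfix ρ' hρ'

end
end

section
/- Under detailed balance (W_{ij} p*_j = W_{ji} p*_i for a stationary distribution p*), the Schnakenberg entropy production rate equals minus the time derivative of the Kullback–Leibler divergence: Σ̇ = −d/dt S(p(t) ‖ p*), where S(p‖q) = ∑_i p_i log(p_i/q_i). -/
open BigOperators

/-! Along the master equation, `d/dt ∑ pᵢ log (pᵢ/qᵢ) = ∑ᵢ Jᵢ (log (pᵢ/qᵢ) + 1)` with net inflows
`Jᵢ = ∑ⱼ Jᵢⱼ`, and antisymmetry of the fluxes `Jᵢⱼ = Wᵢⱼ pⱼ - Wⱼᵢ pᵢ` turns this into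
`-(1/2) ∑ᵢⱼ Jᵢⱼ (log (pⱼ/qⱼ) - log (pᵢ/qᵢ))`. Detailed balance `Wᵢⱼ/Wⱼᵢ = qᵢ/qⱼ` makes the
Schnakenberg force `log (Wᵢⱼ pⱼ / (Wⱼᵢ pᵢ))` equal to `log (pⱼ/qⱼ) - log (pᵢ/qᵢ)`. -/

theorem HasDerivAt.mul_log_div_const {f : ℝ → ℝ} {f' x c : ℝ} (hf : HasDerivAt f f' x)
    (hfx : f x ≠ 0) (hc : c ≠ 0) :
    HasDerivAt (fun t => f t * Real.log (f t / c)) (f' * (Real.log (f x / c) + 1)) x := by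
  refine (hf.mul ((hf.div_const c).log (div_ne_zero hfx hc))).congr_deriv ?_
  field_simp

theorem Finset.sum_sum_mul_eq_neg_half_sum_sum_mul_sub {ι : Type*} [Fintype ι]
    {J : ι → ι → ℝ} (hJ : ∀ i j, J j i = -J i j) (r : ι → ℝ) :
    ∑ i, (∑ j, J i j) * r i = -((1 / 2) * ∑ i, ∑ j, J i j * (r j - r i)) := by
  have hswap : ∑ i, ∑ j, J i j * r j = -∑ i, ∑ j, J i j * r i := by
    rw [Finset.sum_comm, ← Finset.sum_neg_distrib]
    refine Finset.sum_congr rfl fun i _ => ?_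
    rw [← Finset.sum_neg_distrib]
    refine Finset.sum_congr rfl fun j _ => ?_
    rw [hJ, neg_mul]
  simp only [mul_sub, Finset.sum_sub_distrib, hswap, Finset.sum_mul]
  ring

theorem flux_mul_log_eq_of_detailed_balance {wij wji pi pj qi qj : ℝ}
    (hdb : wij * qj = wji * qi) (hqi : qi ≠ 0) (hqj : qj ≠ 0) (hpi : pi ≠ 0) (hpj : pj ≠ 0) :
    (wij * pj - wji * pi) * Real.log (wij * pj / (wji * pi)) =
      (wij * pj - wji * pi) * (Real.log (pj / qj) - Real.log (pi / qi)) := by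
  by_cases hw : wij = 0
  · have hw' : wji = 0 := by simpa [hw, hqi] using hdb.symm
    simp [hw, hw']
  · have hw' : wji ≠ 0 := by
      rintro rfl
      simp_all
    have hratio : wij * pj / (wji * pi) = (pj / qj) / (pi / qi) := by
      rw [div_eq_div_iff (mul_ne_zero hw' hpi) (div_ne_zero hpi hqi)]
      field_simp
      linear_combination hdb
    rw [hratio, Real.log_div (div_ne_zero hpj hqj) (div_ne_zero hpi hqi)]

theorem schnakenberg_detailed_balance_KL_general {ι : Type*} [Fintype ι]
    (W : ι → ι → ℝ) (q : ι → ℝ) (p : ℝ → ι → ℝ) (t₀ : ℝ)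
    (hq : ∀ i, 0 < q i)
    (hdb : ∀ i j, W i j * q j = W j i * q i)
    (hp : ∀ i, 0 < p t₀ i)
    (hode : ∀ i, HasDerivAt (fun t => p t i)
      (∑ j, (W i j * p t₀ j - W j i * p t₀ i)) t₀) :
    HasDerivAt (fun t => ∑ i, p t i * Real.log (p t i / q i))
      (-((1/2) * ∑ i, ∑ j, (W i j * p t₀ j - W j i * p t₀ i) *
          Real.log ((W i j * p t₀ j) / (W j i * p t₀ i)))) t₀ := by
  have hderiv := HasDerivAt.fun_sum (u := Finset.univ) fun i _ =>
    (hode i).mul_log_div_const (hp i).ne' (hq i).ne'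
  refine hderiv.congr_deriv ?_
  rw [Finset.sum_sum_mul_eq_neg_half_sum_sum_mul_sub (fun i j => by ring)]
  simp only [add_sub_add_right_eq_sub]
  congr 2
  refine Finset.sum_congr rfl fun i _ => Finset.sum_congr rfl fun j _ => ?_
  exact (flux_mul_log_eq_of_detailed_balance (hdb i j) (hq i).ne' (hq j).ne' (hp i).ne' (hp j).ne').symm

/-- Under detailed balance `W i j * q j = W j i * q i` with respect to
a stationary distribution `q`, the Schnakenberg entropy production rate equals minus the
time derivative of the Kullback–Leibler divergence `S(p(t)‖q) = ∑ p_i log(p_i/q_i)`. -/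
theorem schnakenberg_detailed_balance_KL {ι : Type*} [Fintype ι]
    (W : ι → ι → ℝ) (q : ι → ℝ) (p : ℝ → ι → ℝ) (t₀ : ℝ)
    (hW : ∀ i j, 0 ≤ W i j)
    (hq : ∀ i, 0 < q i) (hqsum : ∑ i, q i = 1)
    (hdb : ∀ i j, W i j * q j = W j i * q i)
    (hp : ∀ i, 0 < p t₀ i) (hpsum : ∀ t, ∑ i, p t i = 1)
    (hode : ∀ i, HasDerivAt (fun t => p t i)
      (∑ j, (W i j * p t₀ j - W j i * p t₀ i)) t₀) :
    HasDerivAt (fun t => ∑ i, p t i * Real.log (p t i / q i))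
      (-((1/2) * ∑ i, ∑ j, (W i j * p t₀ j - W j i * p t₀ i) *
          Real.log ((W i j * p t₀ j) / (W j i * p t₀ i)))) t₀ :=
  schnakenberg_detailed_balance_KL_general W q p t₀ hq hdb hp hode
end

section
/- Cumulant generating function and Rényi divergence for a quantum quench: for the two-point-measurement entropy production σ of a sudden quench from Hamiltonian H_i to H_f with initial thermal state ρ_i = e^{−βH_i}/Z_i and trivial evolution (V = 1), the CGF K(λ) = log⟨e^{−λσ}⟩ equals (λ−1)·S_λ(ρ_f ‖ ρ_i), where ρ_f = e^{−βH_f}/Z_f and S_λ(ρ‖σ) = (λ−1)^{−1} log Tr(ρ^λ σ^{1−λ}). -/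
open Matrix BigOperators

noncomputable section

/-- Real power of a Hermitian matrix via the spectral decomposition (junk value `0`
otherwise). -/
def matRpow {n : Type*} [Fintype n] [DecidableEq n] (A : Matrix n n ℂ) (α : ℝ) :
    Matrix n n ℂ :=
  if h : A.IsHermitian then
    (h.eigenvectorUnitary : Matrix n n ℂ) *
      Matrix.diagonal (fun i => ((h.eigenvalues i ^ α : ℝ) : ℂ)) *
      (star (h.eigenvectorUnitary : Matrix n n ℂ))
  else 0

/-- Gibbs (thermal) state `e^{-βH}/Z`. -/
def gibbs {n : Type*} [Fintype n] [DecidableEq n] (β : ℝ) (H : Matrix n n ℂ) :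
    Matrix n n ℂ :=
  (NormedSpace.exp (-(β : ℂ) • H)).trace⁻¹ • NormedSpace.exp (-(β : ℂ) • H)

/-- Quantum Rényi divergence `S_λ(ρ‖σ) = (λ−1)⁻¹ log Tr(ρ^λ σ^{1−λ})`. -/
def qRenyiDiv {n : Type*} [Fintype n] [DecidableEq n]
    (lam : ℝ) (ρ σ : Matrix n n ℂ) : ℝ :=
  (lam - 1)⁻¹ * Real.log (((matRpow ρ lam * matRpow σ (1 - lam)).trace).re)

/-! With `F = -β⁻¹ log Z`, the Gibbs state is `ρ = e^{-β(H - F)}`. So every operator in the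
cumulant generating function is a function of `H_f` or of `H_i`, and the identities
`e^{-βλ(H_f - F_f)} = ρ_f^λ` and `e^{βλ(H_i - F_i)} ρ_i = ρ_i^{1-λ}` reduce, through the
continuous functional calculus, to identities of real exponentials on the spectra. Hence the
operator whose trace is taken is `ρ_f^λ ρ_i^{1-λ}`; at `λ = 1` both sides vanish because
`Tr ρ_f = 1`. -/

namespace Matrix

variable {n : Type*} [Fintype n] [DecidableEq n]

lemma continuousOn_spectrum (f : ℝ → ℝ) (A : Matrix n n ℂ) :
    ContinuousOn f (spectrum ℝ A) :=
  A.finite_real_spectrum.continuousOn f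

lemma continuousOn_image_spectrum (f g : ℝ → ℝ) (A : Matrix n n ℂ) :
    ContinuousOn f (g '' spectrum ℝ A) :=
  (A.finite_real_spectrum.image g).continuousOn f

namespace IsHermitian

variable {A : Matrix n n ℂ}

lemma exp_cfc (hA : A.IsHermitian) (f : ℝ → ℝ) :
    NormedSpace.exp (cfc f A) = cfc (fun x => Real.exp (f x)) A := by
  have hexp : cfc Real.exp (cfc f A) = NormedSpace.exp (cfc f A) := by
    -- `NormedSpace.exp` does not depend on a norm, so any C⋆-norm on matrices may be used here.
    open scoped Matrix.Norms.L2Operator in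
    exact CFC.real_exp_eq_normedSpace_exp (cfc_predicate f A)
  rw [← hexp, ← cfc_comp' _ _ _ (continuousOn_image_spectrum _ _ _) (continuousOn_spectrum _ _)
    hA.isSelfAdjoint]

lemma real_smul_eq_cfc (hA : A.IsHermitian) (c : ℝ) :
    (c : ℂ) • A = cfc (fun x => c * x) A := by
  rw [cfc_const_mul_id c A hA.isSelfAdjoint, RCLike.real_smul_eq_coe_smul (K := ℂ)]
  rfl

lemma real_smul_sub_smul_one_eq_cfc (hA : A.IsHermitian) (c r : ℝ) :
    (c : ℂ) • (A - (r : ℂ) • 1) = cfc (fun x => c * (x - r)) A := by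
  rw [cfc_const_mul c _ A (continuousOn_spectrum _ _),
    cfc_sub _ _ A (continuousOn_spectrum _ _) (continuousOn_spectrum _ _),
    cfc_id' ℝ A hA.isSelfAdjoint, cfc_const r A hA.isSelfAdjoint, Algebra.algebraMap_eq_smul_one,
    RCLike.real_smul_eq_coe_smul (K := ℂ), RCLike.real_smul_eq_coe_smul (K := ℂ)]
  rfl

lemma trace_cfc (hA : A.IsHermitian) (f : ℝ → ℝ) :
    (cfc f A).trace = ∑ i, (f (hA.eigenvalues i) : ℂ) := by
  rw [hA.cfc_eq, IsHermitian.cfc, Unitary.conjStarAlgAut_apply, trace_mul_cycle,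
    mem_unitaryGroup_iff'.mp hA.eigenvectorUnitary.2, one_mul, trace_diagonal]
  rfl

lemma matRpow_eq_cfc (hA : A.IsHermitian) (α : ℝ) :
    matRpow A α = cfc (fun x : ℝ => x ^ α) A := by
  rw [matRpow, dif_pos hA, hA.cfc_eq, IsHermitian.cfc]
  rfl

lemma matRpow_cfc (hA : A.IsHermitian) (f : ℝ → ℝ) (α : ℝ) :
    matRpow (cfc f A) α = cfc (fun x => f x ^ α) A := by
  rw [matRpow_eq_cfc (cfc_predicate f A : IsSelfAdjoint _),
    ← cfc_comp' _ _ _ (continuousOn_image_spectrum _ _ _) (continuousOn_spectrum _ _)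
      hA.isSelfAdjoint]

lemma matRpow_zero (hA : A.IsHermitian) : matRpow A 0 = 1 := by
  simp only [matRpow_eq_cfc hA, Real.rpow_zero, cfc_const_one ℝ A]

lemma matRpow_one (hA : A.IsHermitian) : matRpow A 1 = A := by
  simp only [matRpow_eq_cfc hA, Real.rpow_one, cfc_id' ℝ A hA.isSelfAdjoint]

end IsHermitian

end Matrix

section Gibbs

variable {n : Type*} [Fintype n] [DecidableEq n] {H : Matrix n n ℂ}

lemma exp_neg_smul_eq_cfc (hH : H.IsHermitian) (β : ℝ) :
    NormedSpace.exp (-(β : ℂ) • H) = cfc (fun x => Real.exp (-β * x)) H := by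
  rw [← Complex.ofReal_neg, hH.real_smul_eq_cfc, hH.exp_cfc]

lemma trace_exp_neg_smul (hH : H.IsHermitian) (β : ℝ) :
    (NormedSpace.exp (-(β : ℂ) • H)).trace
      = ((∑ i, Real.exp (-β * hH.eigenvalues i) : ℝ) : ℂ) := by
  rw [exp_neg_smul_eq_cfc hH, hH.trace_cfc, Complex.ofReal_sum]

lemma gibbs_eq_cfc (hH : H.IsHermitian) (β : ℝ) :
    gibbs β H
      = cfc (fun x => (∑ i, Real.exp (-β * hH.eigenvalues i))⁻¹ * Real.exp (-β * x)) H := by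
  rw [gibbs, trace_exp_neg_smul hH, exp_neg_smul_eq_cfc hH,
    cfc_const_mul _ _ _ (continuousOn_spectrum _ _), ← Complex.ofReal_inv,
    RCLike.real_smul_eq_coe_smul (K := ℂ)]
  rfl

lemma isHermitian_gibbs (hH : H.IsHermitian) (β : ℝ) : (gibbs β H).IsHermitian := by
  rw [gibbs_eq_cfc hH]
  exact cfc_predicate _ H

lemma sum_exp_pos {ι : Type*} [Fintype ι] [Nonempty ι] (f : ι → ℝ) :
    0 < ∑ i, Real.exp (f i) :=
  Finset.sum_pos (fun _ _ => Real.exp_pos _) Finset.univ_nonempty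

lemma trace_gibbs [Nonempty n] (hH : H.IsHermitian) (β : ℝ) : (gibbs β H).trace = 1 := by
  rw [gibbs, trace_smul, trace_exp_neg_smul hH, smul_eq_mul,
    inv_mul_cancel₀ (Complex.ofReal_ne_zero.mpr (sum_exp_pos _).ne')]

lemma gibbs_eq_cfc_exp_free_energy [Nonempty n] (hH : H.IsHermitian) {β F : ℝ} (hβ : β ≠ 0)
    (hF : F = -β⁻¹ * Real.log ((NormedSpace.exp (-(β : ℂ) • H)).trace).re) :
    gibbs β H = cfc (fun x => Real.exp (-β * (x - F))) H := by
  rw [trace_exp_neg_smul hH, Complex.ofReal_re] at hF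
  have hβF : β * F = -Real.log (∑ i, Real.exp (-β * hH.eigenvalues i)) := by
    rw [hF]; field_simp
  rw [gibbs_eq_cfc hH]
  congr! 2 with x
  rw [show -β * (x - F) = -Real.log (∑ i, Real.exp (-β * hH.eigenvalues i)) + -β * x by
      linear_combination hβF,
    Real.exp_add, Real.exp_neg, Real.exp_log (sum_exp_pos _)]

end Gibbs

lemma exp_mul_exp_mul_gibbs_eq_matRpow_mul_matRpow {n : Type*} [Fintype n] [DecidableEq n]
    [Nonempty n] {Hi Hf : Matrix n n ℂ} (hHi : Hi.IsHermitian) (hHf : Hf.IsHermitian)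
    {β lam Fi Ff : ℝ} (hβ : β ≠ 0)
    (hFi : Fi = -β⁻¹ * Real.log (((NormedSpace.exp (-(β : ℂ) • Hi)).trace).re))
    (hFf : Ff = -β⁻¹ * Real.log (((NormedSpace.exp (-(β : ℂ) • Hf)).trace).re)) :
    NormedSpace.exp (-((β * lam : ℝ) : ℂ) • (Hf - (Ff : ℂ) • 1))
        * NormedSpace.exp (((β * lam : ℝ) : ℂ) • (Hi - (Fi : ℂ) • 1)) * gibbs β Hi
      = matRpow (gibbs β Hf) lam * matRpow (gibbs β Hi) (1 - lam) := by
  rw [gibbs_eq_cfc_exp_free_energy hHi hβ hFi, gibbs_eq_cfc_exp_free_energy hHf hβ hFf,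
    hHi.matRpow_cfc, hHf.matRpow_cfc, ← Complex.ofReal_neg, hHf.real_smul_sub_smul_one_eq_cfc,
    hHi.real_smul_sub_smul_one_eq_cfc, hHf.exp_cfc, hHi.exp_cfc, mul_assoc,
    ← cfc_mul _ _ Hi (continuousOn_spectrum _ _) (continuousOn_spectrum _ _)]
  have hf : (fun x => Real.exp (-(β * lam) * (x - Ff)))
      = fun x => Real.exp (-β * (x - Ff)) ^ lam := by
    funext x
    rw [← Real.exp_mul]
    ring_nf
  have hi : (fun x => Real.exp (β * lam * (x - Fi)) * Real.exp (-β * (x - Fi)))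
      = fun x => Real.exp (-β * (x - Fi)) ^ (1 - lam) := by
    funext x
    rw [← Real.exp_add, ← Real.exp_mul]
    ring_nf
  rw [hf, hi]

/-- **CGF of a sudden quench and Rényi divergence.** For a sudden quench
`H_i → H_f` (trivial evolution `V = 1`) starting from the thermal state
`ρ_i = e^{−βH_i}/Z_i`, the cumulant generating function of the two-point-measurement
entropy production, `K(λ) = log Tr(e^{−βλ(H_f − F_f)} e^{βλ(H_i − F_i)} ρ_i)`, equals
`(λ−1)·S_λ(ρ_f‖ρ_i)` with `ρ_f = e^{−βH_f}/Z_f`. -/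
theorem quench_CGF_eq_renyi
    {n : Type*} [Fintype n] [DecidableEq n]
    (Hi Hf : Matrix n n ℂ) (β lam : ℝ)
    (hHi : Hi.IsHermitian) (hHf : Hf.IsHermitian) (hβ : 0 < β)
    (Fi Ff : ℝ)
    (hFi : Fi = -β⁻¹ * Real.log (((NormedSpace.exp (-(β : ℂ) • Hi)).trace).re))
    (hFf : Ff = -β⁻¹ * Real.log (((NormedSpace.exp (-(β : ℂ) • Hf)).trace).re)) :
    Real.log ((((NormedSpace.exp (-((β * lam : ℝ) : ℂ) • (Hf - (Ff : ℂ) • 1)))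
        * (NormedSpace.exp (((β * lam : ℝ) : ℂ) • (Hi - (Fi : ℂ) • 1)))
        * gibbs β Hi).trace).re)
      = (lam - 1) * qRenyiDiv lam (gibbs β Hf) (gibbs β Hi) := by
  rcases isEmpty_or_nonempty n with hn | hn
  · simp [Matrix.trace, qRenyiDiv]
  rw [exp_mul_exp_mul_gibbs_eq_matRpow_mul_matRpow hHi hHf hβ.ne' hFi hFf, qRenyiDiv]
  rcases eq_or_ne lam 1 with rfl | hlam
  · rw [sub_self, (isHermitian_gibbs hHi β).matRpow_zero, (isHermitian_gibbs hHf β).matRpow_one,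
      mul_one, trace_gibbs hHf β, zero_mul, Complex.one_re, Real.log_one]
  · rw [← mul_assoc, mul_inv_cancel₀ (sub_ne_zero.mpr hlam), one_mul]

end
end
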